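/- Let A be an arena with recharge weight function w such that every vertex is of exactly one of three types: a recharge-vertex (all incoming edges labelled R), a zero-vertex (all incoming edges have weight 0), or a decrement-vertex (all incoming edges have strictly negative weight), and let Ω color recharge-vertices 2, decrement-vertices 1, and zero-vertices 0. Then Player 0 wins the parity game (A, Parity(Ω)) if, and only if, there exists a capacity cap ∈ ℕ such that Player 0 wins the recharge game (A, Recharge(w, cap)). -/

import Mathlib

/-- An arena: a directed graph without terminal vertices, a set `V0` of Player 0's
vertices (Player 1 controls the complement), and an initial vertex. -/
structure Arena (V : Type) where
  V0 : Set V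
  E : V → V → Prop
  vI : V
  succ : ∀ v, ∃ v', E v v'

/-- A play: an infinite path starting in the initial vertex. -/
def Arena.Play {V : Type} (A : Arena V) (ρ : ℕ → V) : Prop :=
  ρ 0 = A.vI ∧ ∀ n, A.E (ρ n) (ρ (n + 1))

/-- The play prefix `ρ 0 ⋯ ρ n` as a list. -/
def prefixList {V : Type} (ρ : ℕ → V) (n : ℕ) : List V :=
  (List.range (n + 1)).map ρ

/-- A strategy for the player controlling the vertices in `p`. -/
def Arena.IsStrategy {V : Type} (A : Arena V) (p : Set V) (σ : List V → V) : Prop :=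
  ∀ (h : List V) (v : V), v ∈ p → A.E v (σ (h ++ [v]))

/-- Consistency of a play with a strategy of the player controlling `p`. -/
def Arena.ConsistentWith {V : Type} (A : Arena V) (p : Set V) (σ : List V → V) (ρ : ℕ → V) : Prop :=
  ∀ n, ρ n ∈ p → ρ (n + 1) = σ (prefixList ρ n)

/-- `σ` is a winning strategy for the player controlling `p` with objective `Obj`. -/
def Arena.WinningStrategy {V : Type} (A : Arena V) (p : Set V) (Obj : Set (ℕ → V))
    (σ : List V → V) : Prop :=
  A.IsStrategy p σ ∧ ∀ ρ, A.Play ρ → A.ConsistentWith p σ ρ → ρ ∈ Obj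

/-- Player 0 wins the game `(A, Win)`. -/
def Arena.Player0Wins {V : Type} (A : Arena V) (Win : Set (ℕ → V)) : Prop :=
  ∃ σ, A.WinningStrategy A.V0 Win σ

/-- `h` is a finite play prefix consistent with the strategy `σ` of the player controlling `p`. -/
def Arena.FinPrefix {V : Type} (A : Arena V) (p : Set V) (σ : List V → V) (h : List V) : Prop :=
  ∃ ρ n, A.Play ρ ∧ A.ConsistentWith p σ ρ ∧ h = prefixList ρ n

/-- A positional strategy only depends on the last vertex. -/
def Positional {X : Type} (σ : List X → X) : Prop :=
  ∀ (h : List X) (v : X), σ (h ++ [v]) = σ [v]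

/-- The energy level of the play prefix `ρ 0 ⋯ ρ n` is `EL w ρ n`:
the sum of the weights of its `n` edges. -/
def EL {V : Type} (w : V → V → ℤ) (ρ : ℕ → V) (n : ℕ) : ℤ :=
  ∑ i ∈ Finset.range n, w (ρ i) (ρ (i + 1))

/-- The energy level of a finite play prefix given as a list. -/
def ELl {V : Type} (w : V → V → ℤ) : List V → ℤ
  | [] => 0
  | [_] => 0
  | a :: b :: l => w a b + ELl w (b :: l)

/-- The average accumulated energy of the first `n` prefixes. -/
noncomputable def avgEL {V : Type} (w : V → V → ℤ) (ρ : ℕ → V) (n : ℕ) : ℝ :=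
  (∑ i ∈ Finset.range n, (EL w ρ i : ℝ)) / (n : ℝ)

/-- The lower-bounded energy objective. -/
def EnergyL {V : Type} (w : V → V → ℤ) : Set (ℕ → V) :=
  {ρ | ∀ n, 0 ≤ EL w ρ n}

/-- The lower- and upper-bounded energy objective. -/
def EnergyLU {V : Type} (w : V → V → ℤ) (cap : ℕ) : Set (ℕ → V) :=
  {ρ | ∀ n, 0 ≤ EL w ρ n ∧ EL w ρ n ≤ (cap : ℤ)}

/-- The average-energy objective: limsup of the averages is at most `t`. -/
def AvgE {V : Type} (w : V → V → ℤ) (t : ℝ) : Set (ℕ → V) :=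
  {ρ | Filter.limsup (fun n => (avgEL w ρ n : EReal)) Filter.atTop ≤ (t : EReal)}

/-- The lower-bounded average-energy objective. -/
def AvgEnergyL {V : Type} (w : V → V → ℤ) (t : ℝ) : Set (ℕ → V) :=
  EnergyL w ∩ AvgE w t

/-- The mean-payoff objective. -/
def MP {V : Type} (w : V → V → ℤ) (t : ℝ) : Set (ℕ → V) :=
  {ρ | Filter.limsup (fun n => (((EL w ρ n : ℝ) / (n : ℝ)) : EReal)) Filter.atTop ≤ (t : EReal)}

/-- A memory structure: initial memory state and update along edges. -/
structure Mem (V M : Type) where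
  mI : M
  upd : M → V → V → M

/-- Tracking the memory state along a play. -/
def Mem.track {V M : Type} (mem : Mem V M) (ρ : ℕ → V) : ℕ → M
  | 0 => mem.mI
  | n + 1 => mem.upd (Mem.track mem ρ n) (ρ n) (ρ (n + 1))

def Mem.runAux {V M : Type} (mem : Mem V M) : M → List V → M
  | m, [] => m
  | m, [_] => m
  | m, a :: b :: l => Mem.runAux mem (mem.upd m a b) (b :: l)

/-- `Upd⁺`: the memory state reached along a finite play prefix. -/
def Mem.run {V M : Type} (mem : Mem V M) (h : List V) : M :=
  Mem.runAux mem mem.mI h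

/-- The strategy `σ` is implemented by the memory structure `mem`
(via some next-move function). -/
def Arena.ImplementedBy {V M : Type} (A : Arena V) (mem : Mem V M) (σ : List V → V) : Prop :=
  ∃ nxt : V → M → V, ∀ (h : List V) (v : V), σ (h ++ [v]) = nxt v (mem.run (h ++ [v]))

/-- `σ` is a finite-state strategy of size `k`. -/
def Arena.FiniteStateOfSize {V : Type} (A : Arena V) (k : ℕ) (σ : List V → V) : Prop :=
  ∃ (M : Type) (inst : Fintype M) (mem : Mem V M),
    @Fintype.card M inst = k ∧ A.ImplementedBy mem σ

/-- The expanded arena `A × M`. -/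
def Arena.expand {V M : Type} (A : Arena V) (mem : Mem V M) : Arena (V × M) where
  V0 := {p | p.1 ∈ A.V0}
  E := fun p q => A.E p.1 q.1 ∧ q.2 = mem.upd p.2 p.1 q.1
  vI := (A.vI, mem.mI)
  succ := fun p => by
    obtain ⟨v', h⟩ := A.succ p.1
    exact ⟨(v', mem.upd p.2 p.1 v'), h, rfl⟩

/-- The extended play in `A × M` corresponding to a play in `A`. -/
def extendPlay {V M : Type} (mem : Mem V M) (ρ : ℕ → V) : ℕ → V × M :=
  fun n => (ρ n, Mem.track mem ρ n)

/-- `(A, Win) ≤_M (A × M, Win')`. -/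
def Reduces {V M : Type} (A : Arena V) (mem : Mem V M) (Win : Set (ℕ → V))
    (Win' : Set (ℕ → V × M)) : Prop :=
  ∀ ρ, A.Play ρ → (ρ ∈ Win ↔ extendPlay mem ρ ∈ Win')

/-- A recharge weight function (`none` is the recharge label `R`) assigns
non-positive weights to all (non-recharge) edges. -/
def RechargeWeights {V : Type} (A : Arena V) (w : V → V → Option ℤ) : Prop :=
  ∀ u v, A.E u v → ∀ k : ℤ, w u v = some k → k ≤ 0

/-- The recharge energy level of the prefix `ρ 0 ⋯ ρ n`: the capacity plus the
accumulated weight since the last `R`-edge. -/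
def ELcap {V : Type} (w : V → V → Option ℤ) (cap : ℕ) (ρ : ℕ → V) : ℕ → ℤ
  | 0 => (cap : ℤ)
  | n + 1 =>
    match w (ρ n) (ρ (n + 1)) with
    | none => (cap : ℤ)
    | some k => ELcap w cap ρ n + k

/-- The recharge objective. -/
def Recharge {V : Type} (w : V → V → Option ℤ) (cap : ℕ) : Set (ℕ → V) :=
  {ρ | ∀ n, 0 ≤ ELcap w cap ρ n}

/-- The average of the recharge energy levels of the first `n` prefixes. -/
noncomputable def avgELcap {V : Type} (w : V → V → Option ℤ) (cap : ℕ) (ρ : ℕ → V)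
    (n : ℕ) : ℝ :=
  (∑ i ∈ Finset.range n, (ELcap w cap ρ i : ℝ)) / (n : ℝ)

/-- The average-bounded recharge objective. -/
def AvgRecharge {V : Type} (w : V → V → Option ℤ) (cap : ℕ) (t : ℝ) : Set (ℕ → V) :=
  {ρ | Filter.limsup (fun n => (avgELcap w cap ρ n : EReal)) Filter.atTop ≤ (t : EReal)} ∩
    Recharge w cap

/-- The (max-)parity objective: the maximal color occurring infinitely often is even. -/
def ParityObj {V : Type} (Ω : V → ℕ) : Set (ℕ → V) :=
  {ρ | ∃ c, Even c ∧ {n | Ω (ρ n) = c}.Infinite ∧ ∀ d, {n | Ω (ρ n) = d}.Infinite → d ≤ c}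

/-- Every vertex is of exactly one of three types, and `Ω` colors recharge-vertices
`2`, decrement-vertices `1` and zero-vertices `0`. -/
def ColoredRecharge {V : Type} (A : Arena V) (w : V → V → Option ℤ) (Ω : V → ℕ) : Prop :=
  ∀ v : V,
    (Ω v = 2 ∧ ∀ u, A.E u v → w u v = none) ∨
    (Ω v = 1 ∧ ∀ u, A.E u v → ∃ k : ℤ, w u v = some k ∧ k < 0) ∨
    (Ω v = 0 ∧ ∀ u, A.E u v → w u v = some 0)

/-
Under `ColoredRecharge` the kind of an edge is determined by the colour of its target: entering a
colour-2 vertex recharges, entering a colour-1 vertex costs energy, entering a colour-0 vertex is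
free. So a play that respects some capacity cannot avoid colour 2 from some point on while visiting
colour 1 infinitely often, and it wins the parity game.

Conversely, if Player 0 wins the parity game, the initial vertex lies outside Player 1's winning
region, a nested fixed point. Outside that region, the stage at which a vertex drops out of the
approximants of its greatest fixed point is a rank that Player 0 can force to decrease strictly at
every colour-1 vertex and to stay put at every colour-0 vertex. Between two recharges at most `N`
decrements happen, so `N` times the largest decrement is a sufficient capacity.
-/

open Set Filter Function

theorem OrderHom.exists_iterate_top_eq_gfp {α : Type*} [CompleteLattice α] [WellFoundedLT α]
    (f : α →o α) : ∃ n, f^[n] ⊤ = f.gfp := by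
  have hanti : Antitone fun n => f^[n] ⊤ := antitone_nat_of_succ_le fun n => by
    rw [iterate_succ_apply]
    exact f.monotone.iterate n le_top
  have hle : ∀ n, f.gfp ≤ f^[n] ⊤ := fun n => by
    induction n with
    | zero => exact le_top
    | succ n ih => rw [iterate_succ_apply', ← f.map_gfp]; exact f.monotone ih
  obtain ⟨n, hn⟩ := WellFoundedLT.antitone_chain_condition hanti
  refine ⟨n, le_antisymm (f.le_gfp ?_) (hle n)⟩
  rw [← iterate_succ_apply' f n, ← hn (n + 1) n.le_succ]

theorem exists_limit_of_forall_extend {α : Type*} {I Q : (ℕ → α) → ℕ → Prop}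
    (step : ∀ ρ n, I ρ n → ∃ ρ' m, n < m ∧ EqOn ρ ρ' (Iic n) ∧ I ρ' m ∧ Q ρ' m)
    {ρ₀ : ℕ → α} {n₀ : ℕ} (h₀ : I ρ₀ n₀) :
    ∃ ρ, ∀ N, ∃ ρ' m, N ≤ m ∧ EqOn ρ ρ' (Iic m) ∧ I ρ' m ∧ Q ρ' m := by
  choose F M hM hF hI hQ using step
  let next (p : {p : (ℕ → α) × ℕ // I p.1 p.2}) : {p : (ℕ → α) × ℕ // I p.1 p.2} :=
    ⟨(F _ _ p.2, M _ _ p.2), hI _ _ p.2⟩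
  let g (k : ℕ) := next^[k] ⟨(ρ₀, n₀), h₀⟩
  have hg (k : ℕ) : g (k + 1) = next (g k) := iterate_succ_apply' _ _ _
  have hlen (k : ℕ) : k ≤ (g k).1.2 := by
    induction k with
    | zero => exact Nat.zero_le _
    | succ k ih => rw [hg]; exact (hM _ _ _).trans_le' ih
  have hmono : Monotone fun k => (g k).1.2 :=
    monotone_nat_of_le_succ fun k => by rw [hg]; exact (hM _ _ _).le
  have hagree {k j : ℕ} (hkj : k ≤ j) : EqOn (g k).1.1 (g j).1.1 (Iic (g k).1.2) := by
    induction j, hkj using Nat.le_induction with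
    | base => exact eqOn_refl _ _
    | succ j hkj ih =>
      rw [hg]
      exact ih.trans ((hF _ _ _).mono (Iic_subset_Iic.2 (hmono hkj)))
  refine ⟨fun i => (g i).1.1 i, fun N => ⟨_, _, (hlen (N + 1)).trans' N.le_succ, fun i hi => ?_,
    (g (N + 1)).2, by rw [hg]; exact hQ _ _ _⟩⟩
  rcases le_total i (N + 1) with h | h
  · exact hagree h (hlen i)
  · exact (hagree h hi).symm

section Plays

variable {V : Type}

lemma prefixList_eq_append (ρ : ℕ → V) (n : ℕ) :
    prefixList ρ n = (List.range n).map ρ ++ [ρ n] := by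
  simp [prefixList, List.range_succ]

lemma prefixList_congr {ρ ρ' : ℕ → V} {n : ℕ} (h : EqOn ρ ρ' (Iic n)) :
    prefixList ρ n = prefixList ρ' n :=
  List.map_congr_left fun _ hi => h (Nat.lt_succ_iff.1 (List.mem_range.1 hi))

lemma eqOn_update_succ (ρ : ℕ → V) (n : ℕ) (y : V) : EqOn ρ (update ρ (n + 1) y) (Iic n) :=
  fun i (hi : i ≤ n) => (update_of_ne (by omega : i ≠ n + 1) _ _).symm

lemma Mem.run_prefixList {M : Type} (mem : Mem V M) (ρ : ℕ → V) (n : ℕ) :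
    mem.run (prefixList ρ n) = mem.track ρ n := by
  suffices ∀ n k, mem.runAux (mem.track ρ k) ((List.range' k (n + 1)).map ρ) = mem.track ρ (k + n)
    by simpa [Mem.run, prefixList, List.range_eq_range', Mem.track] using this n 0
  intro n
  induction n with
  | zero => intro k; rfl
  | succ n ih =>
    intro k
    rw [List.range'_succ, List.map_cons, List.range'_succ, List.map_cons, Mem.runAux,
      ← List.map_cons, ← List.range'_succ, ← Nat.add_assoc, Nat.add_right_comm]
    exact ih (k + 1)

end Plays

namespace Arena

variable {V : Type} (A : Arena V)

def cpre0 (T : Set V) : Set V :=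
  {x | (x ∈ A.V0 → ∃ y, A.E x y ∧ y ∈ T) ∧ (x ∉ A.V0 → ∀ y, A.E x y → y ∈ T)}

def cpre1 (T : Set V) : Set V :=
  {x | (x ∈ A.V0 → ∀ y, A.E x y → y ∈ T) ∧ (x ∉ A.V0 → ∃ y, A.E x y ∧ y ∈ T)}

lemma cpre1_mono : Monotone A.cpre1 := fun _ _ hT _ ⟨h0, h1⟩ =>
  ⟨fun hx y hE => hT (h0 hx y hE), fun hx => (h1 hx).imp fun _ h => ⟨h.1, hT h.2⟩⟩

lemma compl_cpre1 (T : Set V) : (A.cpre1 T)ᶜ = A.cpre0 Tᶜ := by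
  ext x
  by_cases hx : x ∈ A.V0 <;> simp [cpre0, cpre1, hx]

def ConsistentUpTo (σ : List V → V) (ρ : ℕ → V) (n : ℕ) : Prop :=
  ρ 0 = A.vI ∧ ∀ i < n, A.E (ρ i) (ρ (i + 1)) ∧ (ρ i ∈ A.V0 → ρ (i + 1) = σ (prefixList ρ i))

variable {A} {σ : List V → V}

lemma ConsistentUpTo.mono {ρ : ℕ → V} {m n : ℕ} (h : A.ConsistentUpTo σ ρ n) (hmn : m ≤ n) :
    A.ConsistentUpTo σ ρ m :=
  ⟨h.1, fun i hi => h.2 i (by omega)⟩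

lemma ConsistentUpTo.congr {ρ ρ' : ℕ → V} {n : ℕ} (h : A.ConsistentUpTo σ ρ n)
    (heq : EqOn ρ ρ' (Iic n)) : A.ConsistentUpTo σ ρ' n := by
  refine ⟨heq (Nat.zero_le n) ▸ h.1, fun i hi => ?_⟩
  have hi' : i ∈ Iic n := Nat.le_of_lt hi
  rw [← heq hi', ← heq (show i + 1 ∈ Iic n from hi),
    ← prefixList_congr (heq.mono (Iic_subset_Iic.2 hi'))]
  exact h.2 i hi

lemma ConsistentUpTo.update {ρ : ℕ → V} {n : ℕ} {y : V} (h : A.ConsistentUpTo σ ρ n)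
    (hE : A.E (ρ n) y) (hσ : ρ n ∈ A.V0 → y = σ (prefixList ρ n)) :
    A.ConsistentUpTo σ (Function.update ρ (n + 1) y) (n + 1) := by
  have heq := eqOn_update_succ ρ n y
  refine ⟨heq (Nat.zero_le n) ▸ h.1, fun i hi => ?_⟩
  rcases Nat.lt_succ_iff_lt_or_eq.1 hi with hi | rfl
  · exact (h.congr heq).2 i hi
  · rw [update_self, ← heq self_mem_Iic, ← prefixList_congr heq]
    exact ⟨hE, hσ⟩

lemma play_of_forall_consistentUpTo {ρ : ℕ → V} (h : ∀ n, A.ConsistentUpTo σ ρ n) :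
    A.Play ρ ∧ A.ConsistentWith A.V0 σ ρ :=
  ⟨⟨(h 0).1, fun n => ((h (n + 1)).2 n n.lt_succ_self).1⟩,
    fun n => ((h (n + 1)).2 n n.lt_succ_self).2⟩

lemma IsStrategy.edge (hσ : A.IsStrategy A.V0 σ) {ρ : ℕ → V} {n : ℕ} (hn : ρ n ∈ A.V0) :
    A.E (ρ n) (σ (prefixList ρ n)) := by
  rw [prefixList_eq_append]
  exact hσ _ _ hn

variable (A)

theorem exists_strategy_of_invariant {M : Type} (mem : Mem V M) (Inv : M → V → Prop)
    (Step : M → V → V → Prop) (hI : Inv mem.mI A.vI)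
    (hstep : ∀ m x, Inv m x → x ∈ A.cpre0 {y | Step m x y})
    (hinv : ∀ m x y, Inv m x → Step m x y → Inv (mem.upd m x y) y) :
    ∃ σ, A.IsStrategy A.V0 σ ∧ ∀ ρ, A.Play ρ → A.ConsistentWith A.V0 σ ρ →
      ∀ n, Inv (mem.track ρ n) (ρ n) ∧ Step (mem.track ρ n) (ρ n) (ρ (n + 1)) := by
  classical
  let last (h : List V) : V := h.getLast?.getD A.vI
  let σ (h : List V) : V :=
    if hy : ∃ y, A.E (last h) y ∧ Step (mem.run h) (last h) y then hy.choose
    else (A.succ (last h)).choose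
  have hσ : A.IsStrategy A.V0 σ := fun h v _ => by
    have hlast : last (h ++ [v]) = v := by simp [last]
    simp only [σ, hlast]
    split_ifs with hy
    exacts [hy.choose_spec.1, (A.succ v).choose_spec]
  refine ⟨σ, hσ, fun ρ hρ hcons => ?_⟩
  have hmove : ∀ n, Inv (mem.track ρ n) (ρ n) → Step (mem.track ρ n) (ρ n) (ρ (n + 1)) := by
    intro n hn
    obtain ⟨h0, h1⟩ := hstep _ _ hn
    by_cases hx : ρ n ∈ A.V0
    · have hlast : last (prefixList ρ n) = ρ n := by simp [last, prefixList_eq_append]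
      have hy : ∃ y, A.E (last (prefixList ρ n)) y ∧
          Step (mem.run (prefixList ρ n)) (last (prefixList ρ n)) y := by
        rw [hlast, Mem.run_prefixList]; exact h0 hx
      rw [hcons n hx]
      simp only [σ, dif_pos hy]
      simpa [hlast, Mem.run_prefixList] using hy.choose_spec.2
    · exact h1 hx _ (hρ.2 n)
  have hinvn : ∀ n, Inv (mem.track ρ n) (ρ n) := fun n => by
    induction n with
    | zero => exact hρ.1 ▸ hI
    | succ n ih => exact hinv _ _ _ ih (hmove n ih)
  exact fun n => ⟨hinvn n, hmove n (hinvn n)⟩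

end Arena

section Parity

variable {V : Type} {Ω : V → ℕ} {ρ : ℕ → V}

def MaxRecurringColorOne (Ω : V → ℕ) : Set (ℕ → V) :=
  {ρ | (∀ᶠ n in atTop, Ω (ρ n) ≤ 1) ∧ ∃ᶠ n in atTop, Ω (ρ n) = 1}

lemma notMem_maxRecurringColorOne_of_mem_parityObj (h : ρ ∈ ParityObj Ω) :
    ρ ∉ MaxRecurringColorOne Ω := by
  rintro ⟨hle, hone⟩
  obtain ⟨c, hc, hinf, hmax⟩ := h
  have h1 : 1 ≤ c := hmax 1 (Nat.frequently_atTop_iff_infinite.1 hone)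
  obtain ⟨n, hn, hn1⟩ := ((Nat.frequently_atTop_iff_infinite.2 hinf).and_eventually hle).exists
  exact Nat.not_even_one (show c = 1 by omega ▸ hc)

lemma mem_parityObj_of_notMem_maxRecurringColorOne (hΩ : ∀ v, Ω v ≤ 2)
    (h : ρ ∉ MaxRecurringColorOne Ω) : ρ ∈ ParityObj Ω := by
  by_cases h2 : ∃ᶠ n in atTop, Ω (ρ n) = 2
  · refine ⟨2, even_two, Nat.frequently_atTop_iff_infinite.1 h2, fun d hd => ?_⟩
    obtain ⟨n, hn⟩ := hd.nonempty
    exact hn ▸ hΩ (ρ n)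
  · have hle : ∀ᶠ n in atTop, Ω (ρ n) ≤ 1 :=
      (not_frequently.1 h2).mono fun n hn => by have := hΩ (ρ n); omega
    have h0 : ∀ᶠ n in atTop, Ω (ρ n) = 0 :=
      (hle.and (not_frequently.1 fun h1 => h ⟨hle, h1⟩)).mono fun n hn => by omega
    refine ⟨0, ⟨0, rfl⟩, Nat.frequently_atTop_iff_infinite.1 h0.frequently, fun d hd => ?_⟩
    obtain ⟨n, hn, hn0⟩ := ((Nat.frequently_atTop_iff_infinite.2 hd).and_eventually h0).exists
    omega

end Parity

namespace Arena

variable {V : Type} (A : Arena V) (Ω : V → ℕ)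

def forceTarget (Z Y S : Set V) : Set V :=
  Z ∪ {y | Ω y = 1 ∧ y ∈ Y} ∪ {y | Ω y = 0 ∧ y ∈ S}

lemma forceTarget_mono {Z Z' Y Y' S S' : Set V} (hZ : Z ⊆ Z') (hY : Y ⊆ Y') (hS : S ⊆ S') :
    forceTarget Ω Z Y S ⊆ forceTarget Ω Z' Y' S' :=
  union_subset_union (union_subset_union hZ fun _ h => ⟨h.1, hY h.2⟩) fun _ h => ⟨h.1, hS h.2⟩

def forceStep (Z Y : Set V) : Set V →o Set V :=
  ⟨fun S => A.cpre1 (forceTarget Ω Z Y S), fun _ _ hS =>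
    A.cpre1_mono (forceTarget_mono Ω subset_rfl subset_rfl hS)⟩

def force (Z Y : Set V) : Set V := OrderHom.lfp (A.forceStep Ω Z Y)

lemma force_eq (Z Y : Set V) : A.force Ω Z Y = A.cpre1 (forceTarget Ω Z Y (A.force Ω Z Y)) :=
  (OrderHom.map_lfp _).symm

lemma force_mono {Z Z' Y Y' : Set V} (hZ : Z ⊆ Z') (hY : Y ⊆ Y') :
    A.force Ω Z Y ⊆ A.force Ω Z' Y' :=
  OrderHom.lfp.monotone fun _ => A.cpre1_mono (forceTarget_mono Ω hZ hY subset_rfl)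

def forceOn (Z : Set V) : Set V →o Set V := ⟨A.force Ω Z, fun _ _ => A.force_mono Ω subset_rfl⟩

def forceRepeat : Set V →o Set V :=
  ⟨fun Z => OrderHom.gfp (A.forceOn Ω Z), fun _ _ hZ =>
    OrderHom.gfp.monotone fun _ => A.force_mono Ω hZ subset_rfl⟩

/-- `μZ. νY. μS. CPre₁(Z ∪ (Y ∩ Ω⁻¹{1}) ∪ (S ∩ Ω⁻¹{0}))`: the vertices from which Player 1 can
force a play in `MaxRecurringColorOne Ω`. -/
def playerOneRegion : Set V := OrderHom.lfp (A.forceRepeat Ω)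

variable {A Ω} {σ : List V → V}

theorem exists_extension_of_mem_force (hσ : A.IsStrategy A.V0 σ) {Z Y : Set V} {ρ : ℕ → V}
    {n : ℕ} (hρ : A.ConsistentUpTo σ ρ n) (hx : ρ n ∈ A.force Ω Z Y) :
    ∃ ρ' m, n < m ∧ EqOn ρ ρ' (Iic n) ∧ A.ConsistentUpTo σ ρ' m ∧
      (ρ' m ∈ Z ∨ ρ' m ∈ Y ∧ Ω (ρ' m) = 1 ∧ ∀ i ∈ Ioc n m, Ω (ρ' i) ≤ 1) := by
  suffices A.force Ω Z Y ⊆ {x | ∀ ρ n, A.ConsistentUpTo σ ρ n → ρ n = x →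
      ∃ ρ' m, n < m ∧ EqOn ρ ρ' (Iic n) ∧ A.ConsistentUpTo σ ρ' m ∧
        (ρ' m ∈ Z ∨ ρ' m ∈ Y ∧ Ω (ρ' m) = 1 ∧ ∀ i ∈ Ioc n m, Ω (ρ' i) ≤ 1)} from
    this hx ρ n hρ rfl
  refine OrderHom.lfp_le _ fun x ⟨h0, h1⟩ ρ n hρ hx => ?_
  subst hx
  obtain ⟨y, hE, hσy, hy⟩ : ∃ y, A.E (ρ n) y ∧ (ρ n ∈ A.V0 → y = σ (prefixList ρ n)) ∧
      y ∈ forceTarget Ω Z Y _ := by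
    by_cases hx : ρ n ∈ A.V0
    · exact ⟨_, hσ.edge hx, fun _ => rfl, h0 hx _ (hσ.edge hx)⟩
    · obtain ⟨y, hE, hy⟩ := h1 hx
      exact ⟨y, hE, fun h => absurd h hx, hy⟩
  have hρy := hρ.update hE hσy
  have heq := eqOn_update_succ ρ n y
  rcases hy with (hyZ | ⟨hy1, hyY⟩) | ⟨hy0, hyS⟩
  · exact ⟨_, n + 1, n.lt_succ_self, heq, hρy, Or.inl (by rwa [update_self])⟩
  · refine ⟨_, n + 1, n.lt_succ_self, heq, hρy,
      Or.inr ⟨by rwa [update_self], by rwa [update_self], fun i hi => ?_⟩⟩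
    obtain rfl : i = n + 1 := by simp only [mem_Ioc] at hi; omega
    rw [update_self, hy1]
  · obtain ⟨ρ', m, hm, heq', hρ', hout⟩ := hyS _ _ hρy (update_self ..)
    refine ⟨ρ', m, by omega, heq.trans (heq'.mono (Iic_subset_Iic.2 n.le_succ)), hρ',
      hout.imp_right fun ⟨hY, h1, hle⟩ => ⟨hY, h1, fun i hi => ?_⟩⟩
    rcases eq_or_ne i (n + 1) with rfl | hne
    · rw [← heq' self_mem_Iic, update_self, hy0]; exact zero_le_one
    · exact hle i ⟨by simp only [mem_Ioc] at hi; omega, hi.2⟩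

theorem playerOneRegion_subset_unreachable (hσ : A.IsStrategy A.V0 σ)
    (hwin : ∀ ρ, A.Play ρ → A.ConsistentWith A.V0 σ ρ → ρ ∉ MaxRecurringColorOne Ω) :
    A.playerOneRegion Ω ⊆ {x | ∀ ρ n, A.ConsistentUpTo σ ρ n → ρ n ≠ x} := by
  refine OrderHom.lfp_le _ fun x hx ρ₀ n₀ hρ₀ hx₀ => ?_
  subst hx₀
  set U := {x | ∀ ρ n, A.ConsistentUpTo σ ρ n → ρ n ≠ x}
  -- Since no `σ`-consistent history reaches `U`, forcing from `G` always completes a round through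
  -- colours `≤ 1` that ends at colour `1` back in `G`; the limit of the rounds contradicts `hwin`.
  set G := OrderHom.gfp (A.forceOn Ω U)
  have hfix : A.force Ω U G = G := (A.forceOn Ω U).map_gfp
  let I (ρ : ℕ → V) (n : ℕ) : Prop :=
    A.ConsistentUpTo σ ρ n ∧ ρ n ∈ G ∧ ∀ i ∈ Ioc n₀ n, Ω (ρ i) ≤ 1
  have step (ρ : ℕ → V) (n : ℕ) (hI : I ρ n) :
      ∃ ρ' m, n < m ∧ EqOn ρ ρ' (Iic n) ∧ I ρ' m ∧ Ω (ρ' m) = 1 := by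
    obtain ⟨hρ, hG, hle⟩ := hI
    rw [← hfix] at hG
    obtain ⟨ρ', m, hm, heq, hρ', hU | ⟨hY, h1, hle'⟩⟩ := exists_extension_of_mem_force hσ hρ hG
    · exact absurd rfl (hU ρ' m hρ')
    refine ⟨ρ', m, hm, heq, ⟨hρ', hY, fun i hi => ?_⟩, h1⟩
    by_cases hin : i ≤ n
    · rw [← heq hin]; exact hle i ⟨hi.1, hin⟩
    · exact hle' i ⟨by omega, hi.2⟩
  obtain ⟨ρ, hρ⟩ := exists_limit_of_forall_extend step
    (⟨hρ₀, hx, fun i hi => absurd hi.2 (not_le.2 hi.1)⟩ : I ρ₀ n₀)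
  have hcons (n : ℕ) : A.ConsistentUpTo σ ρ n := by
    obtain ⟨ρ', m, hm, heq, ⟨hρ', -⟩, -⟩ := hρ n
    exact (hρ'.congr heq.symm).mono hm
  obtain ⟨hplay, hcons'⟩ := play_of_forall_consistentUpTo hcons
  refine hwin ρ hplay hcons' ⟨eventually_atTop.2 ⟨n₀ + 1, fun i hi => ?_⟩,
    frequently_atTop.2 fun N => ?_⟩
  · obtain ⟨ρ', m, hm, heq, ⟨-, -, hle⟩, -⟩ := hρ i
    rw [heq (show i ∈ Iic m from hm)]
    exact hle i ⟨by omega, hm⟩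
  · obtain ⟨ρ', m, hm, heq, -, h1⟩ := hρ N
    exact ⟨m, hm, by rw [heq self_mem_Iic]; exact h1⟩

variable (A Ω) in
theorem vI_notMem_playerOneRegion (h : A.Player0Wins (ParityObj Ω)) :
    A.vI ∉ A.playerOneRegion Ω := fun hvI => by
  obtain ⟨σ, hσ, hwin⟩ := h
  exact playerOneRegion_subset_unreachable hσ
    (fun ρ hρ hcons => notMem_maxRecurringColorOne_of_mem_parityObj (hwin ρ hρ hcons))
    hvI (fun _ => A.vI) 0 ⟨rfl, fun i hi => absurd hi i.not_lt_zero⟩ rfl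

end Arena

/-- Equivalently: at most `N` visits to colour `1` between two visits to colours `≥ 2`. -/
def DescendingRank {V : Type} (Ω : V → ℕ) (N : ℕ) : Set (ℕ → V) :=
  {ρ | ∃ ℓ : ℕ → ℕ, ∀ n, ℓ n ≤ N ∧ (Ω (ρ (n + 1)) = 1 → ℓ (n + 1) < ℓ n) ∧
    (Ω (ρ (n + 1)) = 0 → ℓ (n + 1) ≤ ℓ n)}

namespace Arena

variable {V : Type} (A : Arena V) (Ω : V → ℕ)

def approx (k : ℕ) : Set V := (A.forceOn Ω (A.playerOneRegion Ω))^[k] univ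

lemma approx_succ (k : ℕ) :
    A.approx Ω (k + 1) = A.force Ω (A.playerOneRegion Ω) (A.approx Ω k) :=
  iterate_succ_apply' _ _ _

lemma exists_approx_eq_playerOneRegion [Finite V] :
    ∃ N, A.approx Ω N = A.playerOneRegion Ω := by
  obtain ⟨N, hN⟩ := (A.forceOn Ω (A.playerOneRegion Ω)).exists_iterate_top_eq_gfp
  exact ⟨N, hN.trans (A.forceRepeat Ω).map_lfp⟩

noncomputable def level (x : V) : ℕ := sInf {k | x ∉ A.approx Ω (k + 1)}

variable {A Ω}

lemma level_lt {x : V} {k : ℕ} (hx : x ∉ A.approx Ω k) : A.level Ω x < k := by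
  obtain _ | k := k
  · exact absurd (mem_univ x) hx
  · exact Nat.lt_succ_of_le (Nat.sInf_le hx)

lemma notMem_force_level [Finite V] {x : V} (hx : x ∉ A.playerOneRegion Ω) :
    x ∉ A.force Ω (A.playerOneRegion Ω) (A.approx Ω (A.level Ω x)) := by
  obtain ⟨N, hN⟩ := A.exists_approx_eq_playerOneRegion Ω
  rw [← approx_succ]
  refine Nat.sInf_mem (s := {k | x ∉ A.approx Ω (k + 1)}) ?_
  obtain _ | N := N
  · exact absurd (hN ▸ mem_univ x) hx
  · exact ⟨N, by show x ∉ A.approx Ω (N + 1); rwa [hN]⟩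

variable (A Ω)

theorem exists_winningStrategy_descendingRank [Finite V] (hvI : A.vI ∉ A.playerOneRegion Ω) :
    ∃ N σ, A.WinningStrategy A.V0 (DescendingRank Ω N) σ := by
  set W := A.playerOneRegion Ω
  obtain ⟨N, hN⟩ := A.exists_approx_eq_playerOneRegion Ω
  have hlevel (x : V) (hx : x ∉ W) : A.level Ω x < N := level_lt (hN ▸ hx)
  let mem : Mem V ℕ := ⟨A.level Ω A.vI, fun k _ y => if Ω y = 0 then k else A.level Ω y⟩
  obtain ⟨σ, hσ, hinv⟩ := A.exists_strategy_of_invariant mem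
    (fun k x => x ∉ A.force Ω W (A.approx Ω k) ∧ k < N)
    (fun k _ y => y ∉ forceTarget Ω W (A.approx Ω k) (A.force Ω W (A.approx Ω k)))
    ⟨notMem_force_level hvI, hlevel _ hvI⟩
    (fun k x hx => by
      have := hx.1
      rwa [force_eq, ← mem_compl_iff, compl_cpre1] at this)
    (fun k x y hx hy => by
      have hyW : y ∉ W := fun h => hy (Or.inl (Or.inl h))
      by_cases h0 : Ω y = 0
      · simp only [mem, if_pos h0]
        exact ⟨fun h => hy (Or.inr ⟨h0, h⟩), hx.2⟩
      · simp only [mem, if_neg h0]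
        exact ⟨notMem_force_level hyW, hlevel y hyW⟩)
  refine ⟨N, σ, hσ, fun ρ hρ hcons => ⟨mem.track ρ, fun n => ?_⟩⟩
  obtain ⟨⟨-, hlt⟩, hstep⟩ := hinv ρ hρ hcons n
  refine ⟨hlt.le, fun h1 => ?_, fun h0 => ?_⟩
  · show (if Ω (ρ (n + 1)) = 0 then _ else _) < _
    rw [if_neg (by omega)]
    exact level_lt fun h => hstep (Or.inl (Or.inr ⟨h1, h⟩))
  · show (if Ω (ρ (n + 1)) = 0 then _ else _) ≤ _
    rw [if_pos h0]

end Arena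

lemma exists_neg_le_weight {V : Type} [Finite V] (w : V → V → Option ℤ) :
    ∃ B : ℕ, ∀ u v k, w u v = some k → -(B : ℤ) ≤ k := by
  obtain ⟨B, hB⟩ := (Set.finite_range fun p : V × V => ((w p.1 p.2).getD 0).natAbs).bddAbove
  refine ⟨B, fun u v k hk => ?_⟩
  have := hB ⟨(u, v), rfl⟩
  simp only [hk, Option.getD_some] at this
  omega

namespace ColoredRecharge

variable {V : Type} {A : Arena V} {w : V → V → Option ℤ} {Ω : V → ℕ}

lemma le_two (hc : ColoredRecharge A w Ω) (v : V) : Ω v ≤ 2 := by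
  rcases hc v with ⟨h, -⟩ | ⟨h, -⟩ | ⟨h, -⟩ <;> omega

lemma ELcap_succ (hc : ColoredRecharge A w Ω) {cap : ℕ} {ρ : ℕ → V} {n : ℕ}
    (hE : A.E (ρ n) (ρ (n + 1))) :
    Ω (ρ (n + 1)) = 2 ∧ ELcap w cap ρ (n + 1) = cap ∨
    Ω (ρ (n + 1)) = 1 ∧ (∃ k < 0, w (ρ n) (ρ (n + 1)) = some k ∧
      ELcap w cap ρ (n + 1) = ELcap w cap ρ n + k) ∨
    Ω (ρ (n + 1)) = 0 ∧ ELcap w cap ρ (n + 1) = ELcap w cap ρ n := by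
  rcases hc (ρ (n + 1)) with ⟨h, hw⟩ | ⟨h, hw⟩ | ⟨h, hw⟩
  · exact Or.inl ⟨h, by simp [ELcap, hw _ hE]⟩
  · obtain ⟨k, hk, hneg⟩ := hw _ hE
    exact Or.inr (Or.inl ⟨h, k, hneg, hk, by simp [ELcap, hk]⟩)
  · exact Or.inr (Or.inr ⟨h, by simp [ELcap, hw _ hE]⟩)

theorem notMem_maxRecurringColorOne (hc : ColoredRecharge A w Ω) {cap : ℕ} {ρ : ℕ → V}
    (hρ : A.Play ρ) (hR : ρ ∈ Recharge w cap) : ρ ∉ MaxRecurringColorOne Ω := by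
  rintro ⟨hle, hone⟩
  obtain ⟨N, hN⟩ := eventually_atTop.1 hle
  have hle_of_le {n m : ℕ} (hn : N ≤ n) (hnm : n ≤ m) : ELcap w cap ρ m ≤ ELcap w cap ρ n := by
    induction m, hnm using Nat.le_induction with
    | base => exact le_rfl
    | succ m hnm ih =>
      rcases hc.ELcap_succ (cap := cap) (hρ.2 m) with ⟨h2, -⟩ | ⟨-, k, hk, -, h⟩ | ⟨-, h⟩
      · have := hN (m + 1) (by omega); omega
      · omega
      · omega
  have hdrop (K : ℕ) : ∃ n ≥ N, ELcap w cap ρ n + K ≤ ELcap w cap ρ N := by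
    induction K with
    | zero => exact ⟨N, le_rfl, by simp⟩
    | succ K ih =>
      obtain ⟨n, hn, hK⟩ := ih
      obtain ⟨m, hm, h1⟩ := frequently_atTop.1 hone (n + 1)
      obtain ⟨m, rfl⟩ : ∃ j, m = j + 1 := ⟨m - 1, by omega⟩
      rcases hc.ELcap_succ (cap := cap) (hρ.2 m) with ⟨h2, -⟩ | ⟨-, k, hk, -, h⟩ | ⟨h0, -⟩
      · omega
      · have := hle_of_le hn (show n ≤ m by omega)
        exact ⟨m + 1, by omega, by push_cast; omega⟩
      · omega
  obtain ⟨n, -, hn⟩ := hdrop ((ELcap w cap ρ N).toNat + 1)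
  have := hR n
  omega

theorem mem_recharge (hc : ColoredRecharge A w Ω) {B N : ℕ}
    (hB : ∀ u v k, w u v = some k → -(B : ℤ) ≤ k) {ρ : ℕ → V} (hρ : A.Play ρ)
    (hrank : ρ ∈ DescendingRank Ω N) : ρ ∈ Recharge w (B * N) := by
  obtain ⟨ℓ, hℓ⟩ := hrank
  have key (n : ℕ) : (B : ℤ) * ℓ n ≤ ELcap w (B * N) ρ n := by
    have hB0 : (0 : ℤ) ≤ B := Nat.cast_nonneg B
    induction n with
    | zero =>
      show _ ≤ ((B * N : ℕ) : ℤ)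
      push_cast
      exact mul_le_mul_of_nonneg_left (by exact_mod_cast (hℓ 0).1) hB0
    | succ n ih =>
      rcases hc.ELcap_succ (hρ.2 n) with ⟨-, h⟩ | ⟨h1, k, -, hk, h⟩ | ⟨h0, h⟩
      · rw [h]
        push_cast
        exact mul_le_mul_of_nonneg_left (by exact_mod_cast (hℓ (n + 1)).1) hB0
      · have hlt : (ℓ (n + 1) : ℤ) + 1 ≤ ℓ n := by exact_mod_cast (hℓ n).2.1 h1
        have := mul_le_mul_of_nonneg_left hlt hB0
        have := hB _ _ _ hk
        rw [h]
        linarith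
      · rw [h]
        exact (mul_le_mul_of_nonneg_left (by exact_mod_cast (hℓ n).2.2 h0) hB0).trans ih
  exact fun n => (key n).trans' (by positivity)

end ColoredRecharge

/-- Player 0 wins the three-color parity game iff there is a
capacity `cap` such that Player 0 wins the recharge game with capacity `cap`. -/
theorem parity_iff_exists_cap {V : Type} [Fintype V] (A : Arena V)
    (w : V → V → Option ℤ) (Ω : V → ℕ)
    (hc : ColoredRecharge A w Ω) :
    A.Player0Wins (ParityObj Ω) ↔ ∃ cap : ℕ, A.Player0Wins (Recharge w cap) := by
  constructor
  · intro h
    obtain ⟨N, σ, hσ, hrank⟩ :=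
      A.exists_winningStrategy_descendingRank Ω (A.vI_notMem_playerOneRegion Ω h)
    obtain ⟨B, hB⟩ := exists_neg_le_weight w
    exact ⟨B * N, σ, hσ, fun ρ hρ hcons => hc.mem_recharge hB hρ (hrank ρ hρ hcons)⟩
  · rintro ⟨cap, σ, hσ, hwin⟩
    exact ⟨σ, hσ, fun ρ hρ hcons => mem_parityObj_of_notMem_maxRecurringColorOne hc.le_two
      (hc.notMem_maxRecurringColorOne hρ (hwin ρ hρ hcons))⟩
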